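/- arXiv:1609.06589 — 3 statements merged into one kernel-verified Lean document; each statement's English description precedes it below -/
import Mathlib

section
/- For r > 0, the function τ(x,y) = (1/r)(√(x+y)+√y)² is superadditive on W': for (x₁,y₁), (x₂,y₂) ∈ W', τ(x₁+x₂, y₁+y₂) ≥ τ(x₁,y₁) + τ(x₂,y₂). -/
theorem stmt_3 (r : ℝ) (hr : 0 < r) (x₁ y₁ x₂ y₂ : ℝ)
    (hy₁ : 0 ≤ y₁) (hxy₁ : 0 ≤ x₁ + y₁) (hy₂ : 0 ≤ y₂) (hxy₂ : 0 ≤ x₂ + y₂) :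
    (1 / r) * (Real.sqrt (x₁ + y₁) + Real.sqrt y₁) ^ 2 +
      (1 / r) * (Real.sqrt (x₂ + y₂) + Real.sqrt y₂) ^ 2 ≤
    (1 / r) * (Real.sqrt ((x₁ + x₂) + (y₁ + y₂)) + Real.sqrt (y₁ + y₂)) ^ 2 := by
  have hr' : 0 ≤ 1 / r := by positivity
  have key : (Real.sqrt (x₁ + y₁) + Real.sqrt y₁) ^ 2 +
      (Real.sqrt (x₂ + y₂) + Real.sqrt y₂) ^ 2 ≤
      (Real.sqrt ((x₁ + x₂) + (y₁ + y₂)) + Real.sqrt (y₁ + y₂)) ^ 2 := by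
    set s1 := Real.sqrt (x₁ + y₁) with hs1
    set t1 := Real.sqrt y₁ with ht1
    set s2 := Real.sqrt (x₂ + y₂) with ht2
    set t2 := Real.sqrt y₂ with ht3
    set S := Real.sqrt ((x₁ + x₂) + (y₁ + y₂)) with hS
    set T := Real.sqrt (y₁ + y₂) with hT
    have h1 : s1 ^ 2 = x₁ + y₁ := Real.sq_sqrt hxy₁
    have h2 : t1 ^ 2 = y₁ := Real.sq_sqrt hy₁
    have h3 : s2 ^ 2 = x₂ + y₂ := Real.sq_sqrt hxy₂
    have h4 : t2 ^ 2 = y₂ := Real.sq_sqrt hy₂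
    have h5 : S ^ 2 = (x₁ + x₂) + (y₁ + y₂) := Real.sq_sqrt (by linarith)
    have h6 : T ^ 2 = y₁ + y₂ := Real.sq_sqrt (by linarith)
    have ns1 : 0 ≤ s1 := Real.sqrt_nonneg _
    have nt1 : 0 ≤ t1 := Real.sqrt_nonneg _
    have ns2 : 0 ≤ s2 := Real.sqrt_nonneg _
    have nt2 : 0 ≤ t2 := Real.sqrt_nonneg _
    have nS : 0 ≤ S := Real.sqrt_nonneg _
    have nT : 0 ≤ T := Real.sqrt_nonneg _
    have cauchy : s1 * t1 + s2 * t2 ≤ S * T := by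
      have hsq : (s1 * t1 + s2 * t2) ^ 2 ≤ (S * T) ^ 2 := by
        nlinarith [sq_nonneg (s1 * t2 - s2 * t1)]
      have hnn : 0 ≤ s1 * t1 + s2 * t2 := by positivity
      nlinarith [mul_nonneg nS nT]
    nlinarith
  have := mul_le_mul_of_nonneg_left key hr'
  nlinarith [this]
end

section
/- Let r > 0, μ ≥ 0, and ρ ∈ [1/2 − μr/4, 1/2 + μr/4] with 0 < ρ < 1. Then for all x ∈ ℝ with 1 − xρ ≥ 0 and x + 1 − xρ ≥ 0, one has (1/r)(√(x + 1 − xρ) + √(1 − xρ))² − μ|x| ≤ 4/r. -/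
theorem stmt_9 (r μ ρ : ℝ) (hr : 0 < r) (hμ : 0 ≤ μ) (hρ₀ : 0 < ρ) (hρ₁ : ρ < 1)
    (hρ : |ρ - 1/2| ≤ μ * r / 4) :
    ∀ x : ℝ, 0 ≤ 1 - x * ρ → 0 ≤ x + (1 - x * ρ) →
      (1 / r) * (Real.sqrt (x + (1 - x * ρ)) + Real.sqrt (1 - x * ρ)) ^ 2 - μ * |x| ≤ 4 / r := by
  intro x hb ha
  set a : ℝ := x + (1 - x * ρ) with ha_def
  set b : ℝ := 1 - x * ρ with hb_def
  obtain ⟨hρl, hρr⟩ := abs_le.mp hρ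
  have habnn : 0 ≤ a * b := mul_nonneg ha hb
  have hρρ : 0 ≤ ρ * (1 - ρ) := mul_nonneg hρ₀.le (by linarith)
  have h1s : 0 ≤ 1 + x * (1 - 2*ρ) / 2 := by
    nlinarith [sq_nonneg x, mul_nonneg (sq_nonneg x) hρρ]
  have hab : a * b ≤ (1 + x * (1 - 2*ρ) / 2) ^ 2 := by
    nlinarith [sq_nonneg (x * (1 - 2*ρ)), mul_nonneg (sq_nonneg x) hρρ]
  have hsqrt : Real.sqrt (a * b) ≤ 1 + x * (1 - 2*ρ) / 2 := by
    calc Real.sqrt (a * b) ≤ Real.sqrt ((1 + x * (1 - 2*ρ) / 2) ^ 2) :=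
          Real.sqrt_le_sqrt hab
      _ = 1 + x * (1 - 2*ρ) / 2 := Real.sqrt_sq h1s
  have hexp : (Real.sqrt a + Real.sqrt b) ^ 2 = a + b + 2 * Real.sqrt (a * b) := by
    rw [add_sq, Real.sq_sqrt ha, Real.sq_sqrt hb, Real.sqrt_mul ha]
    ring
  have hkey : (Real.sqrt a + Real.sqrt b) ^ 2 ≤ 4 + μ * r * |x| := by
    rw [hexp]
    rcases abs_cases x with ⟨hx, hx0⟩ | ⟨hx, hx0⟩ <;> rw [hx] <;>
      nlinarith [mul_nonneg hμ hr.le]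
  have h4 : (1 / r) * (Real.sqrt a + Real.sqrt b) ^ 2 ≤ (1 / r) * (4 + μ * r * |x|) :=
    mul_le_mul_of_nonneg_left hkey (by positivity)
  have : (1 / r) * (4 + μ * r * |x|) = 4 / r + μ * |x| := by
    field_simp
  linarith [this ▸ h4]
end

section
/- Let α ≥ r > 0. If Y is exponential with rate α and U is independent of Y with law Bernoulli(1 − r/α) times an independent exponential of rate r (i.e., U = B·E with B ~ Ber(1 − r/α), E ~ Exp(r) independent), then Y + U is exponential with rate r. -/
/-!
Compare characteristic functions. Those of `Exp(a)` and `Exp(r)` are `a / (a - it)` and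
`r / (r - it)`, so the mixture `U` has characteristic function
`r / a + (1 - r / a) · r / (r - it) = r (a - it) / (a (r - it))`; multiplying by that of `Y`
leaves `r / (r - it)`.
-/

open MeasureTheory ProbabilityTheory Complex

section Mixture

variable {E : Type*} [SeminormedAddCommGroup E] [InnerProductSpace ℝ E] {mE : MeasurableSpace E}

lemma charFun_add_measure [OpensMeasurableSpace E] (μ ν : Measure E) [IsFiniteMeasure μ]
    [IsFiniteMeasure ν] (t : E) :
    charFun (μ + ν) t = charFun μ t + charFun ν t :=
  integral_add_measure ((integrable_const (1 : ℝ)).mono (by fun_prop) (by simp))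
    ((integrable_const (1 : ℝ)).mono (by fun_prop) (by simp))

lemma charFun_smul_measure (μ : Measure E) (c : ENNReal) (t : E) :
    charFun (c • μ) t = c.toReal * charFun μ t := by
  simp_rw [charFun_apply, integral_smul_measure, real_smul]

lemma charFun_ofReal_smul_add_ofReal_smul [OpensMeasurableSpace E] {p q : ℝ} (hp : 0 ≤ p)
    (hq : 0 ≤ q) (μ ν : Measure E) [IsFiniteMeasure μ] [IsFiniteMeasure ν] (t : E) :
    charFun (ENNReal.ofReal p • μ + ENNReal.ofReal q • ν) t =
      p * charFun μ t + q * charFun ν t := by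
  have := μ.smul_finite (ENNReal.ofReal_ne_top (r := p))
  have := ν.smul_finite (ENNReal.ofReal_ne_top (r := q))
  rw [charFun_add_measure, charFun_smul_measure, charFun_smul_measure, ENNReal.toReal_ofReal hp,
    ENNReal.toReal_ofReal hq]

end Mixture

lemma charFun_expMeasure {r : ℝ} (hr : 0 < r) (t : ℝ) :
    charFun (expMeasure r) t = r / (r - t * I) := by
  have hdensity : ∀ x : ℝ, (exponentialPDF r x).toReal • cexp (t * x * I) =
      (Set.Ici 0).indicator (fun x : ℝ => r * cexp (-(r - t * I) * x)) x := by
    intro x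
    rcases lt_or_ge x 0 with hx | hx
    · rw [Set.indicator_of_notMem (Set.notMem_Ici.2 hx), exponentialPDF_of_neg hx,
        ENNReal.toReal_zero, zero_smul]
    · rw [Set.indicator_of_mem (Set.mem_Ici.2 hx), exponentialPDF_of_nonneg hx,
        ENNReal.toReal_ofReal (by positivity), real_smul, ofReal_mul, ofReal_exp, mul_assoc,
        ← Complex.exp_add]
      push_cast
      ring_nf
  change charFun (volume.withDensity (exponentialPDF r)) t = _
  rw [charFun_apply_real, integral_withDensity_eq_integral_toReal_smul (f := exponentialPDF r)
    (measurable_exponentialPDFReal r).ennreal_ofReal (.of_forall fun _ => ENNReal.ofReal_lt_top)]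
  simp_rw [hdensity]
  rw [integral_indicator measurableSet_Ici, integral_Ici_eq_integral_Ioi, integral_const_mul,
    integral_exp_mul_complex_Ioi (by simpa using hr) 0, ofReal_zero, mul_zero, Complex.exp_zero,
    neg_div_neg_eq, mul_one_div]

theorem stmt_12 {Ω : Type*} [MeasurableSpace Ω] (P : Measure Ω) [IsProbabilityMeasure P]
    (r a : ℝ) (hr : 0 < r) (ha : r ≤ a)
    (Y U : Ω → ℝ) (hY : Measurable Y) (hU : Measurable U)
    (hind : IndepFun Y U P)
    (hYlaw : P.map Y = expMeasure a)
    (hUlaw : P.map U =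
      ENNReal.ofReal (r / a) • (Measure.dirac (0 : ℝ)) +
        ENNReal.ofReal (1 - r / a) • expMeasure r) :
    P.map (fun ω => Y ω + U ω) = expMeasure r := by
  have ha0 : 0 < a := hr.trans_le ha
  have := isProbabilityMeasure_expMeasure hr
  have : IsProbabilityMeasure (P.map fun ω => Y ω + U ω) :=
    Measure.isProbabilityMeasure_map (by fun_prop)
  refine Measure.ext_of_charFun (funext fun t => ?_)
  have hUchar : charFun (P.map U) t = r / a + (1 - r / a) * (r / (r - t * I)) := by
    rw [hUlaw, charFun_ofReal_smul_add_ofReal_smul (by positivity)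
      (sub_nonneg.2 ((div_le_one ha0).2 ha)), charFun_dirac, inner_zero_left, ofReal_zero,
      zero_mul, Complex.exp_zero, mul_one, charFun_expMeasure hr]
    push_cast
    rfl
  rw [hind.charFun_map_fun_add_eq_mul hY.aemeasurable hU.aemeasurable, Pi.mul_apply, hUchar,
    hYlaw, charFun_expMeasure ha0, charFun_expMeasure hr]
  have hsub_ne (c : ℝ) (hc : 0 < c) : (c : ℂ) - t * I ≠ 0 := fun h => by
    simpa [hc.ne'] using congrArg re h
  have := hsub_ne r hr
  have := hsub_ne a ha0
  have : (a : ℂ) ≠ 0 := by exact_mod_cast ha0.ne'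
  field_simp
  ring
end
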